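/- Let k be a nonzero real number and let x, X : H₊ → H be bounded operators between complex Hilbert spaces such that X is Hilbert–Schmidt, X*x = 0, x is injective and x*x is invertible. Set Γ := (k²/2)·(Id_{H₊} + (Id_{H₊} + (4/k⁴)·(x*x)^{1/2}·X*X·(x*x)^{1/2})^{1/2}) on H₊ and W := (4/k⁴)·x∘X*X∘x* on H. Then: (a) Tr(Γ/k² − Id_{H₊}) = (1/2)·Tr((Id_H + W)^{1/2} − Id_H); and (b) Tr(log(Γ/k²)) = Tr(log((1/2)·(Id_H + (Id_H + W)^{1/2}))), where in each identity the operator under the trace is trace class and log is defined by the continuous functional calculus of positive invertible operators. -/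

import Mathlib

noncomputable section
namespace Paper
open ContinuousLinearMap

variable {E F : Type*}
  [NormedAddCommGroup E] [InnerProductSpace ℂ E] [CompleteSpace E]
  [NormedAddCommGroup F] [InnerProductSpace ℂ F] [CompleteSpace F]

/-- `A` is a Hilbert–Schmidt operator: for every (equivalently some) Hilbert basis
the squared norms of the images of basis vectors are summable. -/
def IsHS (A : E →L[ℂ] F) : Prop :=
  ∀ (s : Set E) (b : HilbertBasis s ℂ E), Summable fun i => ‖A (b i)‖ ^ 2

/-- `A` is a trace-class operator: it factors as a composition of two
Hilbert–Schmidt operators. -/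
def IsTC (A : E →L[ℂ] F) : Prop :=
  ∃ (B : E →L[ℂ] F) (C : E →L[ℂ] E), IsHS B ∧ IsHS C ∧ A = B ∘L C


/-- The real continuous functional calculus `f(a)` for (self-adjoint) bounded
operators on a complex Hilbert space. -/
def cfcR (f : ℝ → ℝ) (a : E →L[ℂ] E) : E →L[ℂ] E :=
  letI i1 := IsStarNormal.instContinuousFunctionalCalculus (A := E →L[ℂ] E)
  letI i2 := IsSelfAdjoint.instContinuousFunctionalCalculus (A := E →L[ℂ] E)
  cfc f a

/-- Index set of a chosen Hilbert basis of `E`. -/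
def basisIndex (E : Type*) [NormedAddCommGroup E] [InnerProductSpace ℂ E] [CompleteSpace E] :
    Set E :=
  (exists_hilbertBasis ℂ E).choose

/-- A chosen Hilbert basis of `E`. -/
def stdHB (E : Type*) [NormedAddCommGroup E] [InnerProductSpace ℂ E] [CompleteSpace E] :
    HilbertBasis (basisIndex E) ℂ E :=
  (exists_hilbertBasis ℂ E).choose_spec.choose

/-- The trace of an operator (junk value if not trace class); for trace-class
operators this is independent of the chosen Hilbert basis. -/
def trace (A : E →L[ℂ] E) : ℂ :=
  ∑' i : basisIndex E, (inner ℂ ((stdHB E) i) (A ((stdHB E) i)) : ℂ)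

/-- The Hilbert–Schmidt norm (junk value if not Hilbert–Schmidt). -/
def hsNorm (A : E →L[ℂ] F) : ℝ :=
  Real.sqrt (∑' i : basisIndex E, ‖A ((stdHB E) i)‖ ^ 2)

/-- The trace norm `Tr √(A*A)` (junk value if not trace class), the square root
being given by the continuous functional calculus. -/
def traceNorm (A : E →L[ℂ] F) : ℝ :=
  (trace (cfc Real.sqrt (adjoint A ∘L A))).re

end Paper

/- STATEMENT 18 (from the proofs of Theorem `k` and Proposition `k1hat`): with
`Γ := (k²/2)(Id + (Id + (4/k⁴)(x*x)^{1/2} X*X (x*x)^{1/2})^{1/2})` on `H₊` and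
`W := (4/k⁴)·x X*X x*` on `H`:
(a) `Tr(Γ/k² − Id) = (1/2)·Tr((Id + W)^{1/2} − Id)`;
(b) `Tr(log(Γ/k²)) = Tr(log((1/2)(Id + (Id + W)^{1/2})))`,
the operators under the traces being trace class. -/

set_option maxHeartbeats 1000000
set_option synthInstance.maxHeartbeats 200000
set_option linter.unusedSectionVars false

namespace Paper
open ContinuousLinearMap

variable {E F G : Type*}
  [NormedAddCommGroup E] [InnerProductSpace ℂ E] [CompleteSpace E]
  [NormedAddCommGroup F] [InnerProductSpace ℂ F] [CompleteSpace F]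
  [NormedAddCommGroup G] [InnerProductSpace ℂ G] [CompleteSpace G]

open scoped ENNReal NNReal

lemma parseval_hasSum {ι : Type*} (b : HilbertBasis ι ℂ E) (v : E) :
    HasSum (fun i => ‖(inner ℂ (b i) v : ℂ)‖ ^ 2) (‖v‖ ^ 2) := by
  have h := b.hasSum_inner_mul_inner v v
  have h2 : ∀ i, (inner ℂ v (b i) : ℂ) * inner ℂ (b i) v
      = ((‖(inner ℂ (b i) v : ℂ)‖ ^ 2 : ℝ) : ℂ) := by
    intro i
    rw [← inner_conj_symm (𝕜 := ℂ) (b i) v, Complex.mul_conj]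
    norm_cast
    simp [Complex.normSq_eq_norm_sq, RCLike.norm_conj]
    exact norm_inner_symm _ _
  simp_rw [h2] at h
  have h3 := h.mapL Complex.reCLM
  simp only [Complex.reCLM_apply, Complex.ofReal_re] at h3
  convert h3 using 1
  have h4 : (inner ℂ v v : ℂ) = ((‖v‖ : ℂ)) ^ 2 := inner_self_eq_norm_sq_to_K v
  rw [h4]
  norm_cast

lemma parseval_enn {ι : Type*} (b : HilbertBasis ι ℂ E) (v : E) :
    ∑' i, ((‖(inner ℂ (b i) v : ℂ)‖₊ : ℝ≥0∞) ^ 2) = (‖v‖₊ : ℝ≥0∞) ^ 2 := by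
  have hnn : HasSum (fun i => (‖(inner ℂ (b i) v : ℂ)‖₊ ^ 2)) (‖v‖₊ ^ 2) := by
    rw [← NNReal.hasSum_coe]
    push_cast
    exact parseval_hasSum b v
  have := ENNReal.coe_tsum hnn.summable
  rw [hnn.tsum_eq] at this
  exact_mod_cast this.symm

lemma enn_adjoint {ι κ : Type*} (b : HilbertBasis ι ℂ E) (c : HilbertBasis κ ℂ F)
    (A : E →L[ℂ] F) :
    ∑' i, ((‖A (b i)‖₊ : ℝ≥0∞) ^ 2) = ∑' j, ((‖adjoint A (c j)‖₊ : ℝ≥0∞) ^ 2) := by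
  have key : ∀ (j : κ) (i : ι), ((‖(inner ℂ (c j) (A (b i)) : ℂ)‖₊ : ℝ≥0∞) ^ 2)
      = ((‖(inner ℂ (b i) (adjoint A (c j)) : ℂ)‖₊ : ℝ≥0∞) ^ 2) := by
    intro j i
    congr 2
    apply NNReal.coe_injective
    push_cast [coe_nnnorm]
    rw [← adjoint_inner_left, norm_inner_symm]
  calc ∑' i, ((‖A (b i)‖₊ : ℝ≥0∞) ^ 2)
      = ∑' i, ∑' j, ((‖(inner ℂ (c j) (A (b i)) : ℂ)‖₊ : ℝ≥0∞) ^ 2) := by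
        simp_rw [parseval_enn c]
    _ = ∑' j, ∑' i, ((‖(inner ℂ (b i) (adjoint A (c j)) : ℂ)‖₊ : ℝ≥0∞) ^ 2) := by
        rw [ENNReal.tsum_comm]
        simp_rw [key]
    _ = _ := by simp_rw [parseval_enn b]

lemma summable_norm_sq_iff {ι : Type*} (v : ι → F) :
    Summable (fun i => ‖v i‖ ^ 2) ↔ ∑' i, ((‖v i‖₊ : ℝ≥0∞) ^ 2) ≠ ⊤ := by
  have : (fun i => ‖v i‖ ^ 2) = (fun i => ((‖v i‖₊ ^ 2 : ℝ≥0) : ℝ)) := by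
    ext i; push_cast; rfl
  rw [this, NNReal.summable_coe, ← ENNReal.tsum_coe_ne_top_iff_summable]
  simp_rw [ENNReal.coe_pow]

lemma isHS_iff (A : E →L[ℂ] F) :
    IsHS A ↔ ∑' i : basisIndex E, ((‖A ((stdHB E) i)‖₊ : ℝ≥0∞) ^ 2) ≠ ⊤ := by
  constructor
  · intro h
    exact (summable_norm_sq_iff _).mp (h _ (stdHB E))
  · intro h s b
    rw [summable_norm_sq_iff]
    rwa [show ∑' i : s, ((‖A (b i)‖₊ : ℝ≥0∞) ^ 2)
        = ∑' i : basisIndex E, ((‖A ((stdHB E) i)‖₊ : ℝ≥0∞) ^ 2) by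
      rw [enn_adjoint b (stdHB F), enn_adjoint (stdHB E) (stdHB F)]]

lemma IsHS.adjoint' {A : E →L[ℂ] F} (h : IsHS A) : IsHS (adjoint A) := by
  rw [isHS_iff] at h ⊢
  rwa [enn_adjoint (stdHB F) (stdHB E), adjoint_adjoint]

lemma IsHS.comp_left {A : E →L[ℂ] F} (h : IsHS A) (C : F →L[ℂ] G) : IsHS (C ∘L A) := by
  intro s b
  refine Summable.of_nonneg_of_le (fun i => by positivity)
    (fun i => ?_) ((h s b).mul_left (‖C‖ ^ 2))
  calc ‖(C ∘L A) (b i)‖ ^ 2 ≤ (‖C‖ * ‖A (b i)‖) ^ 2 := by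
        apply pow_le_pow_left₀ (norm_nonneg _) (C.le_opNorm _)
    _ = ‖C‖ ^ 2 * ‖A (b i)‖ ^ 2 := by ring

lemma IsHS.comp_right {A : E →L[ℂ] F} (h : IsHS A) (C : G →L[ℂ] E) : IsHS (A ∘L C) := by
  have := (h.adjoint'.comp_left (adjoint C)).adjoint'
  rwa [← adjoint_comp, adjoint_adjoint] at this

lemma IsHS.smul {A : E →L[ℂ] F} (h : IsHS A) (c : ℂ) : IsHS (c • A) := by
  intro s b
  refine Summable.of_nonneg_of_le (fun i => by positivity) (fun i => le_of_eq ?_)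
    ((h s b).mul_left (‖c‖ ^ 2))
  simp [mul_pow, norm_smul]


lemma trace_smul (c : ℂ) (A : E →L[ℂ] E) : trace (c • A) = c * trace A := by
  unfold trace
  simp_rw [ContinuousLinearMap.smul_apply, inner_smul_right]
  exact tsum_mul_left

set_option maxHeartbeats 1000000 in
lemma trace_cyclic {A : E →L[ℂ] F} {B : F →L[ℂ] E} (hA : IsHS A) (hB : IsHS B) :
    trace (B ∘L A) = trace (A ∘L B) := by
  set e := stdHB E with he
  set f := stdHB F with hf
  set g : basisIndex E × basisIndex F → ℂ := fun p =>
    (inner ℂ ((adjoint B) (e p.1)) (f p.2) : ℂ) * (inner ℂ (f p.2) (A (e p.1)) : ℂ) with hg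
  have ha2 : Summable (fun p : basisIndex E × basisIndex F =>
      ‖(inner ℂ (f p.2) (A (e p.1)) : ℂ)‖ ^ 2) := by
    rw [summable_prod_of_nonneg (fun p => by positivity)]
    refine ⟨fun i => (parseval_hasSum f (A (e i))).summable, ?_⟩
    simp_rw [fun i => (parseval_hasSum f (A (e i))).tsum_eq]
    exact hA _ e
  have hb2 : Summable (fun p : basisIndex E × basisIndex F =>
      ‖(inner ℂ (f p.2) ((adjoint B) (e p.1)) : ℂ)‖ ^ 2) := by
    rw [summable_prod_of_nonneg (fun p => by positivity)]
    refine ⟨fun i => (parseval_hasSum f ((adjoint B) (e i))).summable, ?_⟩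
    simp_rw [fun i => (parseval_hasSum f ((adjoint B) (e i))).tsum_eq]
    exact hB.adjoint' _ e
  have habs : Summable (fun p => ‖g p‖) := by
    refine Summable.of_nonneg_of_le (fun p => norm_nonneg _) (fun p => ?_)
      (((ha2.add hb2).mul_left (1/2 : ℝ)))
    rw [hg]
    simp only [norm_mul]
    rw [norm_inner_symm ((adjoint B) (e p.1)) (f p.2)]
    set a := ‖(inner ℂ (f p.2) ((adjoint B) (e p.1)) : ℂ)‖ with hadef
    set b := ‖(inner ℂ (f p.2) (A (e p.1)) : ℂ)‖ with hbdef
    have ha0 : 0 ≤ a := norm_nonneg _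
    have hb0 : 0 ≤ b := norm_nonneg _
    nlinarith [sq_nonneg (a - b)]
  have hg' : Summable g := habs.of_norm
  have hL : trace (B ∘L A) = ∑' (i : basisIndex E) (j : basisIndex F), g (i, j) := by
    unfold trace
    rw [← he]
    congr 1; ext i
    rw [ContinuousLinearMap.comp_apply, ← adjoint_inner_left B]
    exact (f.hasSum_inner_mul_inner _ _).tsum_eq.symm
  have hR : trace (A ∘L B) = ∑' (j : basisIndex F) (i : basisIndex E), g (i, j) := by
    unfold trace
    rw [← hf]
    congr 1; ext j
    rw [ContinuousLinearMap.comp_apply, ← adjoint_inner_left A]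
    rw [← (e.hasSum_inner_mul_inner ((adjoint A) (f j)) (B (f j))).tsum_eq]
    congr 1; ext i
    rw [hg]
    simp only
    rw [adjoint_inner_left B, ← adjoint_inner_left A, mul_comm]
  rw [hL, hR]
  have hg'' : Summable (Function.uncurry fun i j => g (i, j)) := by
    exact hg'
  exact (Summable.tsum_comm' hg'' (fun b' => (hg'.prod_factor b'))
    (fun c => hg'.prod_symm.prod_factor c)).symm

lemma trace_conj {u : E →L[ℂ] F} (hu : adjoint u ∘L u = 1) {R : E →L[ℂ] E} (hR : IsHS R) :
    trace (u ∘L ((R ∘L R) ∘L adjoint u)) = trace (R ∘L R) := by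
  have hu' : ∀ y, adjoint u (u y) = y := fun y => by
    have := congrArg (fun T : E →L[ℂ] E => T y) hu
    simpa using this
  have h1 := trace_cyclic (A := u ∘L R) (B := R ∘L adjoint u)
    (hR.comp_left u) (hR.comp_right (adjoint u))
  have e1 : (R ∘L adjoint u) ∘L (u ∘L R) = R ∘L R := by ext v; simp [hu']
  have e2 : (u ∘L R) ∘L (R ∘L adjoint u) = u ∘L ((R ∘L R) ∘L adjoint u) := by ext v; simp
  rw [e1, e2] at h1
  exact h1.symm


section CFCStuff
variable {T S a b : E →L[ℂ] E}

lemma nonneg_isSelfAdjoint (h : 0 ≤ a) : IsSelfAdjoint a :=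
  ((ContinuousLinearMap.nonneg_iff_isPositive a).mp h).isSelfAdjoint

lemma sqrt_nonneg' (a : E →L[ℂ] E) : 0 ≤ cfc Real.sqrt a :=
  cfc_nonneg fun x _ => Real.sqrt_nonneg x

lemma sqrt_mul_self' (h : 0 ≤ a) : cfc Real.sqrt a * cfc Real.sqrt a = a := by
  have ha : IsSelfAdjoint a := nonneg_isSelfAdjoint h
  rw [← cfc_mul Real.sqrt Real.sqrt a (by fun_prop) (by fun_prop)]
  have heq : (spectrum ℝ a).EqOn (fun x => Real.sqrt x * Real.sqrt x) (id : ℝ → ℝ) := fun x hx =>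
    Real.mul_self_sqrt (spectrum_nonneg_of_nonneg h hx)
  rw [cfc_congr heq, cfc_id ℝ a]

lemma sqrt_unique' (hb : 0 ≤ b) (h : b * b = a) : cfc Real.sqrt a = b := by
  have hbsa : IsSelfAdjoint b := nonneg_isSelfAdjoint hb
  have h2 : a = cfc (fun x : ℝ => x * x) b := by
    rw [cfc_mul (fun x : ℝ => x) (fun x : ℝ => x) b (by fun_prop) (by fun_prop), cfc_id' ℝ b, ← h]
  rw [h2, ← cfc_comp' Real.sqrt (fun x : ℝ => x * x) b (by fun_prop) (by fun_prop)]
  calc cfc (fun x => Real.sqrt (x * x)) b = cfc (id : ℝ → ℝ) b := cfc_congr fun x hx => by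
        simp [Real.sqrt_mul_self (spectrum_nonneg_of_nonneg hb hx)]
    _ = b := cfc_id ℝ b

lemma real_smul_eq (r : ℝ) (A : E →L[ℂ] F) : (r : ℂ) • A = r • A := by
  simp [Complex.coe_smul]

lemma real_smul_vec (r : ℝ) (v : E) : (r : ℂ) • v = r • v := by
  simp [Complex.coe_smul]

lemma smul_nonneg'' (r : ℝ) (hr : 0 ≤ r) (hT : 0 ≤ T) : 0 ≤ r • T := by
  rw [ContinuousLinearMap.nonneg_iff_isPositive] at hT
  rw [← real_smul_eq, ContinuousLinearMap.nonneg_iff_isPositive]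
  have h := hT.adjoint_conj (((Real.sqrt r : ℝ) : ℂ) • (1 : E →L[ℂ] E))
  have e1 : ContinuousLinearMap.adjoint (((Real.sqrt r : ℝ) : ℂ) • (1 : E →L[ℂ] E))
      = ((Real.sqrt r : ℝ) : ℂ) • (1 : E →L[ℂ] E) := by
    rw [← ContinuousLinearMap.star_eq_adjoint, star_smul, star_one, Complex.star_def,
      Complex.conj_ofReal]
  rw [e1] at h
  have e2 : (((Real.sqrt r : ℝ) : ℂ) • (1 : E →L[ℂ] E)) ∘L
      (T ∘L (((Real.sqrt r : ℝ) : ℂ) • (1 : E →L[ℂ] E))) = (r : ℂ) • T := by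
    ext v
    simp [smul_smul, ← Complex.ofReal_mul, Real.mul_self_sqrt hr, mul_comm]
  rwa [e2] at h

lemma smul_mono (r : ℝ) (hr : 0 ≤ r) (h : T ≤ S) : r • T ≤ r • S := by
  have h2 := smul_nonneg'' r hr (sub_nonneg.mpr h)
  rw [smul_sub] at h2
  exact sub_nonneg.mp h2

end CFCStuff

section Conj
variable {u : E →L[ℂ] F}

lemma conj_nonneg (hT : 0 ≤ T) (u : E →L[ℂ] F) :
    0 ≤ u ∘L (T ∘L ContinuousLinearMap.adjoint u) := by
  rw [ContinuousLinearMap.nonneg_iff_isPositive] at hT ⊢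
  exact hT.conj_adjoint u

variable (hu : ContinuousLinearMap.adjoint u ∘L u = 1)

include hu in
lemma apply_adjoint_apply (y : E) : ContinuousLinearMap.adjoint u (u y) = y := by
  have := congrArg (fun T : E →L[ℂ] E => T y) hu
  simpa using this

include hu in
lemma conj_mul' (Q1 Q2 : E →L[ℂ] E) :
    (u ∘L (Q1 ∘L ContinuousLinearMap.adjoint u)) ∘L (u ∘L (Q2 ∘L ContinuousLinearMap.adjoint u))
      = u ∘L ((Q1 ∘L Q2) ∘L ContinuousLinearMap.adjoint u) := by
  ext v; simp [apply_adjoint_apply hu]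

include hu in
lemma conj_pow' (Q : E →L[ℂ] E) (n : ℕ) :
    (u ∘L (Q ∘L ContinuousLinearMap.adjoint u)) ^ (n + 1)
      = u ∘L ((Q ^ (n + 1)) ∘L ContinuousLinearMap.adjoint u) := by
  induction n with
  | zero => simp
  | succ n ih =>
    rw [pow_succ, ih, pow_succ]
    exact conj_mul' hu _ _

include hu in
lemma exp_conj (Q : E →L[ℂ] E) :
    NormedSpace.exp (u ∘L (Q ∘L ContinuousLinearMap.adjoint u))
      = 1 + u ∘L ((NormedSpace.exp Q - 1) ∘L ContinuousLinearMap.adjoint u) := by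
  classical
  have hsum : HasSum (fun n : ℕ => (n.factorial : ℝ)⁻¹ • Q ^ n) (NormedSpace.exp Q) := by
    rw [NormedSpace.exp_eq_tsum ℝ]
    exact (NormedSpace.expSeries_summable' (𝕂 := ℝ) Q).hasSum
  let M : (E →L[ℂ] E) →L[ℂ] (F →L[ℂ] F) :=
    ((ContinuousLinearMap.compL ℂ F E F).flip (ContinuousLinearMap.adjoint u)).comp
      ((ContinuousLinearMap.compL ℂ E E F) u)
  have hM : ∀ P : E →L[ℂ] E, M P = u ∘L (P ∘L ContinuousLinearMap.adjoint u) := by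
    intro P; ext v; simp [M]
  have h2 := hsum.mapL M
  have h2' : HasSum (fun n : ℕ => (n.factorial : ℝ)⁻¹ •
      (u ∘L ((Q ^ n) ∘L ContinuousLinearMap.adjoint u)))
      (u ∘L (NormedSpace.exp Q ∘L ContinuousLinearMap.adjoint u)) := by
    rw [← hM]
    convert h2 using 2 with n
    rw [M.map_smul_of_tower, hM]
  have key : ∀ n : ℕ, (n.factorial : ℝ)⁻¹ • (u ∘L (Q ∘L ContinuousLinearMap.adjoint u)) ^ n
      = (n.factorial : ℝ)⁻¹ • (u ∘L ((Q ^ n) ∘L ContinuousLinearMap.adjoint u))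
        + (if n = 0 then (1 - u ∘L ((1 : E →L[ℂ] E) ∘L ContinuousLinearMap.adjoint u)) else 0) := by
    intro n
    match n with
    | 0 => simp
    | (n + 1) => rw [conj_pow' hu]; simp
  have h3 : HasSum (fun n : ℕ => (n.factorial : ℝ)⁻¹ •
        (u ∘L (Q ∘L ContinuousLinearMap.adjoint u)) ^ n)
      ((u ∘L (NormedSpace.exp Q ∘L ContinuousLinearMap.adjoint u))
        + (1 - u ∘L ((1 : E →L[ℂ] E) ∘L ContinuousLinearMap.adjoint u))) := by
    rw [funext key]
    exact h2'.add (hasSum_ite_eq 0 _)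
  have hfinal : (u ∘L (NormedSpace.exp Q ∘L ContinuousLinearMap.adjoint u))
      + (1 - u ∘L ((1 : E →L[ℂ] E) ∘L ContinuousLinearMap.adjoint u))
      = 1 + u ∘L ((NormedSpace.exp Q - 1) ∘L ContinuousLinearMap.adjoint u) := by
    ext v
    simp
    abel
  calc NormedSpace.exp (u ∘L (Q ∘L ContinuousLinearMap.adjoint u))
      = ∑' n : ℕ, (n.factorial : ℝ)⁻¹ • (u ∘L (Q ∘L ContinuousLinearMap.adjoint u)) ^ n := by
        rw [NormedSpace.exp_eq_tsum ℝ]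
    _ = _ := h3.tsum_eq
    _ = _ := hfinal

open ContinuousLinearMap

lemma conj_add (u : E →L[ℂ] F) (P Q : E →L[ℂ] E) :
    u ∘L ((P + Q) ∘L adjoint u) = u ∘L (P ∘L adjoint u) + u ∘L (Q ∘L adjoint u) := by
  ext v; simp

lemma conj_smul (u : E →L[ℂ] F) (c : ℂ) (P : E →L[ℂ] E) :
    u ∘L ((c • P) ∘L adjoint u) = c • (u ∘L (P ∘L adjoint u)) := by
  ext v; simp

lemma zero_le_one' : (0 : E →L[ℂ] E) ≤ 1 :=
  (ContinuousLinearMap.nonneg_iff_isPositive _).mpr ContinuousLinearMap.isPositive_one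

include hu in
lemma sqrt_conj {T : E →L[ℂ] E} (hT : 0 ≤ T) :
    cfc Real.sqrt ((1 : F →L[ℂ] F) + u ∘L (T ∘L adjoint u))
      = 1 + u ∘L ((cfc Real.sqrt ((1 : E →L[ℂ] E) + T) - 1) ∘L adjoint u) := by
  set R := cfc Real.sqrt ((1 : E →L[ℂ] E) + T) with hRdef
  set S := R - 1 with hSdef
  have h1T : (0 : E →L[ℂ] E) ≤ 1 + T := add_nonneg zero_le_one' hT
  have hone : (1 : E →L[ℂ] E) ≤ 1 + T := le_add_of_nonneg_right hT
  have hRR : R * R = 1 + T := sqrt_mul_self' h1T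
  have hSnn : (0 : E →L[ℂ] E) ≤ S := by
    rw [hSdef, sub_nonneg, hRdef]
    rw [one_le_cfc_iff Real.sqrt ((1 : E →L[ℂ] E) + T) (by fun_prop) (nonneg_isSelfAdjoint h1T)]
    intro x hx
    have hx1 : (1 : ℝ) ≤ x := CFC.one_le_iff ((1 : E →L[ℂ] E) + T) (nonneg_isSelfAdjoint h1T) |>.mp hone x hx
    rw [show (1:ℝ) = Real.sqrt 1 from (Real.sqrt_one).symm]
    exact Real.sqrt_le_sqrt hx1
  have hbnn : (0 : F →L[ℂ] F) ≤ 1 + u ∘L (S ∘L adjoint u) :=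
    add_nonneg zero_le_one' (conj_nonneg hSnn u)
  have hS2 : S * S + (S + S) = T := by
    have expand : S * S + (S + S) = R * R - 1 := by
      rw [hSdef]; noncomm_ring
    rw [expand, hRR]; abel
  have hsq : ((1 : F →L[ℂ] F) + u ∘L (S ∘L adjoint u)) * ((1 : F →L[ℂ] F) + u ∘L (S ∘L adjoint u))
      = (1 : F →L[ℂ] F) + u ∘L (T ∘L adjoint u) := by
    have hmul : (u ∘L (S ∘L adjoint u)) * (u ∘L (S ∘L adjoint u))
        = u ∘L ((S * S) ∘L adjoint u) := conj_mul' hu S S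
    calc ((1 : F →L[ℂ] F) + u ∘L (S ∘L adjoint u)) * ((1 : F →L[ℂ] F) + u ∘L (S ∘L adjoint u))
        = 1 + ((u ∘L (S ∘L adjoint u)) * (u ∘L (S ∘L adjoint u))
            + (u ∘L (S ∘L adjoint u) + u ∘L (S ∘L adjoint u))) := by noncomm_ring
      _ = 1 + (u ∘L ((S * S) ∘L adjoint u)
            + (u ∘L (S ∘L adjoint u) + u ∘L (S ∘L adjoint u))) := by rw [hmul]
      _ = 1 + u ∘L ((S * S + (S + S)) ∘L adjoint u) := by rw [conj_add, conj_add]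
      _ = (1 : F →L[ℂ] F) + u ∘L (T ∘L adjoint u) := by rw [hS2]
  exact sqrt_unique' hbnn hsq

lemma isHS_sqrt_of_le {S : E →L[ℂ] E} (hS : 0 ≤ S) {B : E →L[ℂ] F} (hB : IsHS B)
    (hle : S ≤ adjoint B ∘L B) : IsHS (cfc Real.sqrt S) := by
  intro s b
  have hsa : IsSelfAdjoint (cfc Real.sqrt S) := cfc_predicate _ _
  have hadj : adjoint (cfc Real.sqrt S) = cfc Real.sqrt S := by
    rw [← ContinuousLinearMap.star_eq_adjoint]; exact hsa.star_eq
  have hkey : ∀ v : E, ‖cfc Real.sqrt S v‖ ^ 2 ≤ ‖B v‖ ^ 2 := by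
    intro v
    have e1 : ‖cfc Real.sqrt S v‖ ^ 2 = RCLike.re (inner ℂ v (S v) : ℂ) := by
      rw [← inner_self_eq_norm_sq (𝕜 := ℂ)]
      congr 1
      calc (inner ℂ (cfc Real.sqrt S v) (cfc Real.sqrt S v) : ℂ)
          = inner ℂ ((adjoint (cfc Real.sqrt S)) v) (cfc Real.sqrt S v) := by rw [hadj]
        _ = inner ℂ v (cfc Real.sqrt S (cfc Real.sqrt S v)) := adjoint_inner_left _ _ _
        _ = inner ℂ v (S v) := by
            rw [show cfc Real.sqrt S (cfc Real.sqrt S v) = (cfc Real.sqrt S ∘L cfc Real.sqrt S) v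
              from rfl, show cfc Real.sqrt S ∘L cfc Real.sqrt S = S from sqrt_mul_self' hS]
    have hpos := ((ContinuousLinearMap.le_def _ _).mp hle).inner_nonneg_right v
    have e2 : RCLike.re (inner ℂ v (S v) : ℂ) ≤ RCLike.re (inner ℂ v ((adjoint B ∘L B) v) : ℂ) := by
      have : (inner ℂ v (((adjoint B ∘L B) - S) v) : ℂ)
          = inner ℂ v ((adjoint B ∘L B) v) - inner ℂ v (S v) := by
        rw [ContinuousLinearMap.sub_apply, inner_sub_right]
      rw [this] at hpos; replace hpos := (RCLike.le_iff_re_im.mp hpos).1; rw [map_zero, map_sub] at hpos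
      linarith
    have e3 : RCLike.re (inner ℂ v ((adjoint B ∘L B) v) : ℂ) = ‖B v‖ ^ 2 := by
      rw [ContinuousLinearMap.comp_apply, adjoint_inner_right]
      exact inner_self_eq_norm_sq _
    rw [e1]; rw [e3] at e2; exact e2
  exact Summable.of_nonneg_of_le (fun i => by positivity) (fun i => hkey _) (hB s b)

lemma isTC_of_sq {S : E →L[ℂ] E} (hS : 0 ≤ S) (hHS : IsHS (cfc Real.sqrt S)) : IsTC S :=
  ⟨cfc Real.sqrt S, cfc Real.sqrt S, hHS, hHS, (sqrt_mul_self' hS).symm⟩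

lemma isTC_smul {S : E →L[ℂ] E} (c : ℂ) (hS : 0 ≤ S) (hHS : IsHS (cfc Real.sqrt S)) :
    IsTC (c • S) := by
  refine ⟨c • cfc Real.sqrt S, cfc Real.sqrt S, hHS.smul c, hHS, ?_⟩
  rw [show (c • cfc Real.sqrt S) ∘L cfc Real.sqrt S = c • (cfc Real.sqrt S ∘L cfc Real.sqrt S)
    from ContinuousLinearMap.smul_comp c _ _, show cfc Real.sqrt S ∘L cfc Real.sqrt S = S
    from sqrt_mul_self' hS]

include hu in
lemma isTC_conj {S : E →L[ℂ] E} (hS : 0 ≤ S) (hHS : IsHS (cfc Real.sqrt S)) :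
    IsTC (u ∘L (S ∘L adjoint u)) := by
  set R := cfc Real.sqrt S with hR
  refine ⟨u ∘L (R ∘L adjoint u), u ∘L (R ∘L adjoint u),
    (hHS.comp_right (adjoint u)).comp_left u, (hHS.comp_right (adjoint u)).comp_left u, ?_⟩
  rw [show (u ∘L (R ∘L adjoint u)) ∘L (u ∘L (R ∘L adjoint u)) = u ∘L ((R ∘L R) ∘L adjoint u)
    from conj_mul' hu R R, show R ∘L R = S from sqrt_mul_self' hS]


lemma adjoint_comp_self_nonneg (A : E →L[ℂ] F) : (0 : E →L[ℂ] E) ≤ adjoint A ∘L A := by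
  rw [ContinuousLinearMap.nonneg_iff_isPositive]
  constructor
  · rw [← ContinuousLinearMap.isSelfAdjoint_iff_isSymmetric, ContinuousLinearMap.isSelfAdjoint_iff', adjoint_comp, adjoint_adjoint]
  · intro v
    simp only [ContinuousLinearMap.reApplyInnerSelf, ContinuousLinearMap.comp_apply]
    rw [adjoint_inner_left]
    exact inner_self_nonneg

lemma adjoint_smul' (c : ℂ) (A : E →L[ℂ] F) :
    adjoint (c • A) = star c • adjoint A :=
  map_smulₛₗ (ContinuousLinearMap.adjoint : (E →L[ℂ] F) ≃ₗᵢ⋆[ℂ] (F →L[ℂ] E)) c A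

lemma cfcR_eq (f : ℝ → ℝ) (a : E →L[ℂ] E) : cfcR f a = cfc f a := rfl

end Conj
end Paper

open Paper ContinuousLinearMap in
theorem statement18
    (Hplus : Type) [NormedAddCommGroup Hplus] [InnerProductSpace ℂ Hplus]
    [CompleteSpace Hplus]
    (H : Type) [NormedAddCommGroup H] [InnerProductSpace ℂ H] [CompleteSpace H]
    (k : ℝ) (hk : k ≠ 0)
    (x X : Hplus →L[ℂ] H) (hX : IsHS X)
    (h1 : adjoint X ∘L x = 0) (hinj : Function.Injective ⇑x)
    (hunit : IsUnit (adjoint x ∘L x))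
    (sq : Hplus →L[ℂ] Hplus) (hsq : sq = cfcR Real.sqrt (adjoint x ∘L x))
    (Γ : Hplus →L[ℂ] Hplus)
    (hΓ : Γ = ((k : ℂ) ^ 2 / 2) • ((1 : Hplus →L[ℂ] Hplus) +
      cfcR Real.sqrt ((1 : Hplus →L[ℂ] Hplus) +
        ((4 : ℂ) / (k : ℂ) ^ 4) • (sq ∘L ((adjoint X ∘L X) ∘L sq)))))
    (W : H →L[ℂ] H)
    (hW : W = ((4 : ℂ) / (k : ℂ) ^ 4) • (x ∘L ((adjoint X ∘L X) ∘L adjoint x))) :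
    -- (a)
    (IsTC (((k : ℂ) ^ 2)⁻¹ • Γ - (1 : Hplus →L[ℂ] Hplus)) ∧
      IsTC (cfcR Real.sqrt ((1 : H →L[ℂ] H) + W) - (1 : H →L[ℂ] H)) ∧
      trace (((k : ℂ) ^ 2)⁻¹ • Γ - (1 : Hplus →L[ℂ] Hplus)) =
        (1 / 2 : ℂ) * trace (cfcR Real.sqrt ((1 : H →L[ℂ] H) + W) - (1 : H →L[ℂ] H))) ∧
    -- (b)
    (IsTC (cfcR Real.log (((k : ℂ) ^ 2)⁻¹ • Γ)) ∧
      IsTC (cfcR Real.log ((1 / 2 : ℂ) •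
        ((1 : H →L[ℂ] H) + cfcR Real.sqrt ((1 : H →L[ℂ] H) + W)))) ∧
      trace (cfcR Real.log (((k : ℂ) ^ 2)⁻¹ • Γ)) =
        trace (cfcR Real.log ((1 / 2 : ℂ) •
          ((1 : H →L[ℂ] H) + cfcR Real.sqrt ((1 : H →L[ℂ] H) + W))))) := by
  -- scalars
  have hkC : (k : ℂ) ≠ 0 := Complex.ofReal_ne_zero.mpr hk
  have hk2 : (k : ℂ) ^ 2 ≠ 0 := pow_ne_zero _ hkC
  set c : ℝ := 4 / k ^ 4 with hc
  have hk4 : (0:ℝ) < k ^ 4 := by positivity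
  have hc0 : 0 < c := by positivity
  have hcoe : ((4 : ℂ) / (k : ℂ) ^ 4) = ((c : ℝ) : ℂ) := by
    rw [hc]; push_cast; ring
  -- positivity of x†x and spectrum
  have hxx : (0 : Hplus →L[ℂ] Hplus) ≤ adjoint x ∘L x := adjoint_comp_self_nonneg x
  have hxxsa : IsSelfAdjoint (adjoint x ∘L x) := nonneg_isSelfAdjoint hxx
  have hspec : ∀ t ∈ spectrum ℝ (adjoint x ∘L x), 0 < t := by
    intro t ht
    rcases eq_or_lt_of_le (spectrum_nonneg_of_nonneg hxx ht) with h | h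
    · exact absurd ht (h ▸ (spectrum.zero_notMem_iff ℝ).mpr hunit)
    · exact h
  -- sq and its inverse
  have hsq_cfc : sq = cfc Real.sqrt (adjoint x ∘L x) := by rw [hsq, cfcR_eq]
  have hsq_nonneg : (0 : Hplus →L[ℂ] Hplus) ≤ sq := hsq_cfc ▸ sqrt_nonneg' _
  have hsq_sa : IsSelfAdjoint sq := hsq_cfc ▸ cfc_predicate _ _
  have hsq_adj : adjoint sq = sq := by
    rw [← ContinuousLinearMap.star_eq_adjoint]; exact hsq_sa.star_eq
  set e0 := cfc (fun t : ℝ => (Real.sqrt t)⁻¹) (adjoint x ∘L x) with he0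
  have hcont_inv : ContinuousOn (fun t : ℝ => (Real.sqrt t)⁻¹)
      (spectrum ℝ (adjoint x ∘L x)) :=
    ContinuousOn.inv₀ Real.continuous_sqrt.continuousOn
      (fun t ht => (Real.sqrt_ne_zero'.mpr (hspec t ht)))
  have he0_sa : IsSelfAdjoint e0 := cfc_predicate _ _
  have he0_adj : adjoint e0 = e0 := by
    rw [← ContinuousLinearMap.star_eq_adjoint]; exact he0_sa.star_eq
  have hse : sq ∘L e0 = 1 := by
    rw [hsq_cfc, he0]
    rw [show cfc Real.sqrt (adjoint x ∘L x) ∘L cfc (fun t : ℝ => (Real.sqrt t)⁻¹)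
        (adjoint x ∘L x) = cfc Real.sqrt (adjoint x ∘L x) * cfc (fun t : ℝ => (Real.sqrt t)⁻¹)
        (adjoint x ∘L x) from rfl]
    rw [← cfc_mul _ _ _ (Real.continuous_sqrt.continuousOn) hcont_inv]
    rw [cfc_congr (g := fun _ : ℝ => (1:ℝ))
      (fun t ht => mul_inv_cancel₀ (Real.sqrt_ne_zero'.mpr (hspec t ht)))]
    rw [cfc_const 1 _ hxxsa, map_one]
  have hes : e0 ∘L sq = 1 := by
    rw [hsq_cfc, he0]
    rw [show cfc (fun t : ℝ => (Real.sqrt t)⁻¹) (adjoint x ∘L x) ∘L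
        cfc Real.sqrt (adjoint x ∘L x) = cfc (fun t : ℝ => (Real.sqrt t)⁻¹) (adjoint x ∘L x)
        * cfc Real.sqrt (adjoint x ∘L x) from rfl]
    rw [← cfc_mul _ _ _ hcont_inv (Real.continuous_sqrt.continuousOn)]
    rw [cfc_congr (g := fun _ : ℝ => (1:ℝ))
      (fun t ht => inv_mul_cancel₀ (Real.sqrt_ne_zero'.mpr (hspec t ht)))]
    rw [cfc_const 1 _ hxxsa, map_one]
  have hes' : ∀ v, e0 (sq v) = v := fun v => by
    have := congrArg (fun T : Hplus →L[ℂ] Hplus => T v) hes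
    simpa using this
  -- the partial isometry u
  set u := x ∘L e0 with hudef
  have hadj_u : adjoint u = e0 ∘L adjoint x := by rw [hudef, adjoint_comp, he0_adj]
  have hu : adjoint u ∘L u = 1 := by
    rw [hadj_u, hudef]
    have hassoc : (e0 ∘L adjoint x) ∘L (x ∘L e0) = e0 ∘L ((adjoint x ∘L x) ∘L e0) := by
      ext v; simp
    rw [hassoc]
    have h2 : (adjoint x ∘L x) ∘L e0
        = cfc (fun t : ℝ => t * (Real.sqrt t)⁻¹) (adjoint x ∘L x) := by
      conv_lhs => rw [show adjoint x ∘L x = cfc (id : ℝ → ℝ) (adjoint x ∘L x)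
        from (cfc_id ℝ _ hxxsa).symm]
      rw [he0, show cfc (id : ℝ → ℝ) (adjoint x ∘L x) ∘L cfc (fun t : ℝ => (Real.sqrt t)⁻¹)
          (adjoint x ∘L x) = cfc (id : ℝ → ℝ) (adjoint x ∘L x) * cfc
          (fun t : ℝ => (Real.sqrt t)⁻¹) (adjoint x ∘L x) from rfl]
      rw [← cfc_mul _ _ _ continuousOn_id hcont_inv]
      simp only [id_eq]
    rw [h2, he0, show cfc (fun t : ℝ => (Real.sqrt t)⁻¹) (adjoint x ∘L x) ∘L
        cfc (fun t : ℝ => t * (Real.sqrt t)⁻¹) (adjoint x ∘L x)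
        = cfc (fun t : ℝ => (Real.sqrt t)⁻¹) (adjoint x ∘L x) * cfc
        (fun t : ℝ => t * (Real.sqrt t)⁻¹) (adjoint x ∘L x) from rfl]
    rw [← cfc_mul _ _ _ hcont_inv (by exact continuousOn_id.mul hcont_inv)]
    rw [cfc_congr (g := fun _ : ℝ => (1:ℝ)) (fun t ht => ?_)]
    · rw [cfc_const 1 _ hxxsa, map_one]
    · have ht0 := hspec t ht
      have hsq0 : Real.sqrt t ≠ 0 := Real.sqrt_ne_zero'.mpr ht0
      have : t = Real.sqrt t * Real.sqrt t := (Real.mul_self_sqrt ht0.le).symm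
      rw [this]
      field_simp
      rw [Real.sqrt_sq (Real.sqrt_nonneg t)]
  have hx_eq : x = u ∘L sq := by
    rw [hudef]; ext v
    simp [hes']
  have hxadj : adjoint x = sq ∘L adjoint u := by
    rw [hx_eq, adjoint_comp, hsq_adj]
  -- N and B
  set P : Hplus →L[ℂ] Hplus := adjoint X ∘L X with hP
  set N := ((4 : ℂ) / (k : ℂ) ^ 4) • (sq ∘L (P ∘L sq)) with hNdef
  set B := X ∘L sq with hBdef
  have hBHS : IsHS B := hX.comp_right sq
  have hBB : adjoint B ∘L B = sq ∘L (P ∘L sq) := by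
    rw [hBdef, adjoint_comp, hsq_adj]
    ext v; simp [hP]
  have hN_r : N = c • (adjoint B ∘L B) := by
    rw [hNdef, hBB, hcoe, real_smul_eq]
  have hN : (0 : Hplus →L[ℂ] Hplus) ≤ N := by
    rw [hN_r]
    exact smul_nonneg'' c hc0.le (adjoint_comp_self_nonneg B)
  have hNsa : IsSelfAdjoint N := nonneg_isSelfAdjoint hN
  -- W as conjugation of N
  have hWconj : W = u ∘L (N ∘L adjoint u) := by
    rw [hW]
    have : x ∘L (P ∘L adjoint x) = u ∘L ((sq ∘L (P ∘L sq)) ∘L adjoint u) := by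
      rw [hxadj, hx_eq]; ext v; simp
    rw [this, ← conj_smul, ← hNdef]
  -- R and S
  set R := cfc Real.sqrt ((1 : Hplus →L[ℂ] Hplus) + N) with hRdef
  set S := R - 1 with hSdef
  have h1N : (0 : Hplus →L[ℂ] Hplus) ≤ 1 + N := add_nonneg zero_le_one' hN
  have h1Nsa : IsSelfAdjoint ((1 : Hplus →L[ℂ] Hplus) + N) := nonneg_isSelfAdjoint h1N
  have hone : (1 : Hplus →L[ℂ] Hplus) ≤ 1 + N := le_add_of_nonneg_right hN
  have hS_nonneg : (0 : Hplus →L[ℂ] Hplus) ≤ S := by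
    rw [hSdef, sub_nonneg, hRdef]
    rw [one_le_cfc_iff Real.sqrt _ (Real.continuous_sqrt.continuousOn) h1Nsa]
    intro t ht
    have h1t : (1:ℝ) ≤ t := (CFC.one_le_iff (R := ℝ) _ h1Nsa).mp hone t ht
    rw [show (1:ℝ) = Real.sqrt 1 from Real.sqrt_one.symm]
    exact Real.sqrt_le_sqrt h1t
  have hSsa : IsSelfAdjoint S := nonneg_isSelfAdjoint hS_nonneg
  -- S as cfc of N, and S ≤ (1/2) N
  have e_oneN : (1 : Hplus →L[ℂ] Hplus) + N = cfc (fun t : ℝ => 1 + t) N := by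
    rw [show (fun t : ℝ => 1 + t) = (fun t : ℝ => 1 + id t) from rfl,
      cfc_const_add 1 id N continuousOn_id hNsa, cfc_id ℝ N hNsa, map_one]
  have hR_cfc : R = cfc (fun t : ℝ => Real.sqrt (1 + t)) N := by
    rw [hRdef, e_oneN, ← cfc_comp' Real.sqrt (fun t : ℝ => 1 + t) N
      (Real.continuous_sqrt.continuousOn) (by fun_prop) hNsa]
  have hS_cfc : S = cfc (fun t : ℝ => Real.sqrt (1 + t) - 1) N := by
    rw [hSdef, hR_cfc, cfc_sub (fun t : ℝ => Real.sqrt (1 + t)) (fun _ : ℝ => (1:ℝ)) N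
      (by fun_prop) (by fun_prop), cfc_const 1 N hNsa, map_one]
  have hhalfN : (1/2 : ℝ) • N = cfc (fun t : ℝ => (1/2) * t) N := by
    rw [show (fun t : ℝ => (1/2 : ℝ) * t) = (fun t : ℝ => (1/2 : ℝ) * id t) from rfl,
      cfc_const_mul (1/2 : ℝ) id N continuousOn_id, cfc_id ℝ N hNsa]
  have hSle : S ≤ (1/2 : ℝ) • N := by
    rw [hS_cfc, hhalfN]
    rw [cfc_le_iff _ _ N (by fun_prop) (by fun_prop) hNsa]
    intro t ht
    have ht0 : 0 ≤ t := spectrum_nonneg_of_nonneg hN ht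
    have h1t : (0:ℝ) ≤ 1 + t := by linarith
    nlinarith [Real.sq_sqrt h1t, Real.sqrt_nonneg (1 + t)]
  -- HS bound operators
  set r1 : ℝ := Real.sqrt 2 / k ^ 2 with hr1
  set B1 := ((r1 : ℝ) : ℂ) • B with hB1def
  have hB1HS : IsHS B1 := hBHS.smul _
  have hB1B1 : adjoint B1 ∘L B1 = (1/2 : ℝ) • N := by
    rw [hN_r, hB1def, adjoint_smul', ContinuousLinearMap.smul_comp,
      ContinuousLinearMap.comp_smul, smul_smul, Complex.star_def, Complex.conj_ofReal,
      smul_smul, ← real_smul_eq]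
    congr 1
    norm_cast
    rw [hr1, hc, div_mul_div_comm, Real.mul_self_sqrt (by norm_num),
      show k ^ 2 * k ^ 2 = k ^ 4 by ring]
    field_simp
    ring
  have hSleB1 : S ≤ adjoint B1 ∘L B1 := hB1B1 ▸ hSle
  have hsqrtS_HS : IsHS (cfc Real.sqrt S) := isHS_sqrt_of_le hS_nonneg hB1HS hSleB1
  -- the identity (k²)⁻¹ Γ = 1 + (1/2) S
  have hhalf : ((k : ℂ) ^ 2)⁻¹ * ((k : ℂ) ^ 2 / 2) = 1/2 := by field_simp
  have hD : ((k : ℂ) ^ 2)⁻¹ • Γ = 1 + (1/2 : ℂ) • S := by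
    rw [hΓ, cfcR_eq, smul_smul, hhalf, ← hRdef,
      show R = S + 1 by rw [hSdef]; abel]
    module
  -- sqrt of 1 + W
  have hsqrtW : cfcR Real.sqrt ((1 : H →L[ℂ] H) + W)
      = 1 + u ∘L (S ∘L adjoint u) := by
    rw [cfcR_eq, hWconj, sqrt_conj hu hN, ← hRdef, ← hSdef]
  -- Part (a)
  have hDsub : ((k : ℂ) ^ 2)⁻¹ • Γ - 1 = (1/2 : ℂ) • S := by
    rw [hD]; abel
  have hWsub : cfcR Real.sqrt ((1 : H →L[ℂ] H) + W) - 1 = u ∘L (S ∘L adjoint u) := by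
    rw [hsqrtW]; abel
  have hSsq : S = cfc Real.sqrt S ∘L cfc Real.sqrt S := (sqrt_mul_self' hS_nonneg).symm
  have parta : IsTC (((k : ℂ) ^ 2)⁻¹ • Γ - (1 : Hplus →L[ℂ] Hplus)) ∧
      IsTC (cfcR Real.sqrt ((1 : H →L[ℂ] H) + W) - (1 : H →L[ℂ] H)) ∧
      trace (((k : ℂ) ^ 2)⁻¹ • Γ - (1 : Hplus →L[ℂ] Hplus)) =
        (1 / 2 : ℂ) * trace (cfcR Real.sqrt ((1 : H →L[ℂ] H) + W) - (1 : H →L[ℂ] H)) := by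
    refine ⟨?_, ?_, ?_⟩
    · rw [hDsub]; exact isTC_smul _ hS_nonneg hsqrtS_HS
    · rw [hWsub]; exact isTC_conj hu hS_nonneg hsqrtS_HS
    · rw [hDsub, hWsub, trace_smul]
      congr 1
      have := trace_conj hu (R := cfc Real.sqrt S) hsqrtS_HS
      rw [← hSsq] at this
      · exact this.symm
  -- Part (b)
  have hShalf_eq : (1/2 : ℂ) • S = (1/2 : ℝ) • S := by
    rw [show ((1:ℂ)/2) = (((1:ℝ)/2 : ℝ) : ℂ) by norm_num, real_smul_eq]
  have hShalf_nonneg : (0 : Hplus →L[ℂ] Hplus) ≤ (1/2 : ℂ) • S := by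
    rw [hShalf_eq]; exact smul_nonneg'' _ (by norm_num) hS_nonneg
  have hD1 : (1 : Hplus →L[ℂ] Hplus) ≤ ((k : ℂ) ^ 2)⁻¹ • Γ := by
    rw [hD]; exact le_add_of_nonneg_right hShalf_nonneg
  have hD_nonneg : (0 : Hplus →L[ℂ] Hplus) ≤ ((k : ℂ) ^ 2)⁻¹ • Γ :=
    le_trans zero_le_one' hD1
  have hDsa : IsSelfAdjoint (((k : ℂ) ^ 2)⁻¹ • Γ) := nonneg_isSelfAdjoint hD_nonneg
  have hDspec : ∀ t ∈ spectrum ℝ (((k : ℂ) ^ 2)⁻¹ • Γ), 0 < t := by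
    intro t ht
    have := (CFC.one_le_iff (R := ℝ) _ hDsa).mp hD1 t ht
    linarith
  set K := cfc Real.log (((k : ℂ) ^ 2)⁻¹ • Γ) with hKdef
  have hKsa : IsSelfAdjoint K := cfc_predicate _ _
  have hK0 : (0 : Hplus →L[ℂ] Hplus) ≤ K :=
    cfc_nonneg fun t ht => Real.log_nonneg (by
      have := (CFC.one_le_iff (R := ℝ) _ hDsa).mp hD1 t ht; linarith)
  have hcontlog : ContinuousOn Real.log (spectrum ℝ (((k : ℂ) ^ 2)⁻¹ • Γ)) :=
    Real.continuousOn_log.mono (fun t ht => by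
      simp only [Set.mem_compl_iff, Set.mem_singleton_iff]
      exact (hDspec t ht).ne')
  have hKle : K ≤ (1/2 : ℝ) • S := by
    have hsub : (1/2 : ℝ) • S = ((k : ℂ) ^ 2)⁻¹ • Γ - 1 := by
      rw [hD, hShalf_eq]; abel
    have hsub2 : ((k : ℂ) ^ 2)⁻¹ • Γ - 1
        = cfc (fun t : ℝ => t - 1) (((k : ℂ) ^ 2)⁻¹ • Γ) := by
      rw [cfc_sub (fun t : ℝ => t) (fun _ : ℝ => (1:ℝ)) _ (by fun_prop) (by fun_prop),
        cfc_id' ℝ _ hDsa, cfc_const 1 _ hDsa, map_one]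
    rw [hKdef, hsub, hsub2]
    rw [cfc_le_iff _ _ _ hcontlog (by fun_prop) hDsa]
    intro t ht
    exact Real.log_le_sub_one_of_pos (hDspec t ht)
  -- K ≤ B2† B2
  set r2 : ℝ := (k ^ 2)⁻¹ with hr2
  set B2 := ((r2 : ℝ) : ℂ) • B with hB2def
  have hB2HS : IsHS B2 := hBHS.smul _
  have hB2B2 : adjoint B2 ∘L B2 = (1/2 : ℝ) • ((1/2 : ℝ) • N) := by
    rw [hN_r, hB2def, adjoint_smul', ContinuousLinearMap.smul_comp,
      ContinuousLinearMap.comp_smul, smul_smul, Complex.star_def, Complex.conj_ofReal,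
      smul_smul, smul_smul, ← real_smul_eq]
    congr 1
    norm_cast
    rw [hr2, hc]
    field_simp
    ring
  have hKleB2 : K ≤ adjoint B2 ∘L B2 := by
    rw [hB2B2]
    exact le_trans hKle (smul_mono _ (by norm_num) hSle)
  have hsqrtK_HS : IsHS (cfc Real.sqrt K) := isHS_sqrt_of_le hK0 hB2HS hKleB2
  have hKsq : K = cfc Real.sqrt K ∘L cfc Real.sqrt K := (sqrt_mul_self' hK0).symm
  -- the conjugated log
  have hexpK : NormedSpace.exp K = ((k : ℂ) ^ 2)⁻¹ • Γ := CFC.exp_log _ ((StarOrderedRing.isStrictlyPositive_iff_spectrum_pos _ hDsa).mpr hDspec)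
  have hKconj_sa : IsSelfAdjoint (u ∘L (K ∘L adjoint u)) := by
    rw [ContinuousLinearMap.isSelfAdjoint_iff']
    rw [adjoint_comp, adjoint_comp, adjoint_adjoint]
    have hKadj : adjoint K = K := by
      rw [← ContinuousLinearMap.star_eq_adjoint]; exact hKsa.star_eq
    rw [hKadj]
    ext v; simp
  have hlog_conj : cfc Real.log ((1 : H →L[ℂ] H) + u ∘L (((1/2 : ℂ) • S) ∘L adjoint u))
      = u ∘L (K ∘L adjoint u) := by
    have hexp_conj := exp_conj hu K
    rw [hexpK] at hexp_conj
    have hsub3 : ((k : ℂ) ^ 2)⁻¹ • Γ - 1 = (1/2 : ℂ) • S := hDsub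
    rw [hsub3] at hexp_conj
    have := CFC.log_exp (u ∘L (K ∘L adjoint u)) hKconj_sa
    rw [hexp_conj] at this
    exact this
  -- RHS operator of (b)
  have hRHSb : (1 / 2 : ℂ) • ((1 : H →L[ℂ] H) + cfcR Real.sqrt ((1 : H →L[ℂ] H) + W))
      = (1 : H →L[ℂ] H) + u ∘L (((1/2 : ℂ) • S) ∘L adjoint u) := by
    rw [hsqrtW, conj_smul]
    module
  refine ⟨parta, ?_, ?_, ?_⟩
  · rw [cfcR_eq, ← hKdef]
    exact isTC_of_sq hK0 hsqrtK_HS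
  · rw [cfcR_eq, hRHSb, hlog_conj]
    exact isTC_conj hu hK0 hsqrtK_HS
  · rw [cfcR_eq, cfcR_eq, hRHSb, hlog_conj, ← hKdef]
    have := trace_conj hu (R := cfc Real.sqrt K) hsqrtK_HS
    rw [← hKsq] at this
    exact this.symm
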